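/- arXiv:2412.02257 — 4 statements merged into one kernel-verified Lean document; each statement's English description precedes it below -/
import Mathlib

section
/- Let k and t be positive integers. Then |ω_k(2t+1)| ≤ ((24k−1)/24)^t·√(6/π³)·√(t+1)·|cos α_k|·(1 + C_1*(k)/t), where C_1*(k) := (α_k²·(cosh α_k − 1) + 4·C_1(k))/(4·|cos α_k|) and C_1(k) := 3k·(3⌈√k⌉+1)²·α_k^{6⌈√k⌉+4}/(2⌈√k⌉·(6⌈√k⌉+4)!). -/
/-!
Substituting `ℓ = t + 1 - m` and `α_k² = (π/6)²(24k-1)` writes `ω_k(2t+1)` as an explicit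
positive prefactor times the truncated cosine series `∑_{m ≤ t+1} (-1)^m b_m α_k^{2m} / (2m)!`
with weights `b_m = C(2t+2, t+1+m) (t+1+m)`. These weights decrease from
`b_0 = (t+1) C(2t+2, t+1)`, and `b_0 - b_m ≤ C(2t+2, t+1) m(m-1)` because consecutive differences
are `2m C(2t+2, t+1+m)`. Comparing with `b_0 cos α_k` term by term, and using
`m(m-1)/(2m)! ≤ 1/(4 (2m-2)!)`, the sum is within `C(2t+2, t+1) α_k² (cosh α_k - 1)/4` of
`b_0 cos α_k`. Wallis' bound `C(2n, n) ≤ 4ⁿ/√(πn)` turns the prefactor into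
`((24k-1)/24)^t √(6/π³) √(t+1)`; `cos α_k ≠ 0` because `24k - 1` is not divisible by `3`, and the
term `4 C_1(k)` in `C_1*(k)` is only used through its sign.
-/

open Real BigOperators Finset

noncomputable section

/-- The partition function `p(n)`. -/
def pp (n : ℕ) : ℕ := Fintype.card (Nat.Partition n)

/-- `μ(n) = (π/6)·√(24n−1)`. -/
def μ (n : ℕ) : ℝ := π / 6 * Real.sqrt (24 * (n : ℝ) - 1)

/-- `α = π/6`. -/
def αc : ℝ := π / 6

/-- Rising factorial `(a)_m`. -/
def rf (a : ℝ) : ℕ → ℝ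
  | 0 => 1
  | m + 1 => rf a m * (a + (m : ℝ))

/-- Falling factorial `x(x−1)⋯(x−n+1)`. -/
def ff (x : ℝ) : ℕ → ℝ
  | 0 => 1
  | n + 1 => ff x n * (x - (n : ℝ))

/-- Generalized binomial coefficient for real `x`. -/
def gbinom (x : ℝ) (n : ℕ) : ℝ := ff x n / (Nat.factorial n : ℝ)

/-- The coefficients `ω_k(t)`. -/
def ω (k t : ℕ) : ℝ :=
  ((24 * (k : ℝ) - 1) / (4 * Real.sqrt 6)) ^ t *
    ∑ l ∈ Finset.range ((t + 1) / 2 + 1),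
      (Nat.choose (t + 1) l : ℝ) * ((t + 1 - l : ℕ) : ℝ) /
          (Nat.factorial (t + 1 - 2 * l) : ℝ) *
        (-1 : ℝ) ^ l * (π / 6) ^ ((t : ℤ) - 2 * (l : ℤ)) *
        (24 * (k : ℝ) - 1) ^ (-(l : ℤ))

/-- `E_1(t)`. -/
def E1 (t : ℕ) : ℝ :=
  if t = 0 then 1
  else
    (-1 / 24 : ℝ) ^ t * (rf (1 / 2 - (t : ℝ)) (t + 1) / (t : ℝ)) *
      ∑ u ∈ Finset.Icc 1 t,
        (-1 : ℝ) ^ u * rf (-(t : ℝ)) u * αc ^ (2 * u) /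
          ((Nat.factorial (t + u) : ℝ) * (Nat.factorial (2 * u - 1) : ℝ))

/-- `O_1(t)`. -/
def O1 (t : ℕ) : ℝ :=
  π / (12 * Real.sqrt 6) * ((-1 : ℝ) ^ t * rf (1 / 2 - (t : ℝ)) (t + 1) / 24 ^ t) *
    ∑ u ∈ Finset.range (t + 1),
      (-1 : ℝ) ^ u * rf (-(t : ℝ)) u * αc ^ (2 * u) /
        ((Nat.factorial (t + u + 1) : ℝ) * (Nat.factorial (2 * u) : ℝ))

/-- `e_2(t)`. -/
def e2 (t : ℕ) : ℝ :=
  if t = 0 then 1 else 36 / (π ^ 2 + 36) * ((1 + (αc ^ 2)⁻¹) / 24) ^ t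

/-- `o_2(t)`. -/
def o2 (t : ℕ) : ℝ :=
  6 / (π * Real.sqrt 24) * (-1 / 24 : ℝ) ^ t *
    ∑ m ∈ Finset.range (t + 1),
      (-(αc ^ 2)⁻¹) ^ m * gbinom (-(2 * (m : ℝ) + 1) / 2) (t - m)

/-- `E_2(t)`. -/
def E2 (t : ℕ) : ℝ :=
  if t = 0 then 1
  else if t = 1 then (36 - π ^ 2) / (24 * π ^ 2)
  else 54 / (π ^ 4 * (1 + (αc ^ 2)⁻¹)) * ((1 + (αc ^ 2)⁻¹) / 24) ^ (t - 1)

/-- `O_2(t)`. -/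
def O2 (t : ℕ) : ℝ := if t = 0 then o2 0 else o2 t - o2 (t - 1) / 24

/-- `h_1` with `h_1(2t) = E_1(t)`, `h_1(2t+1) = O_1(t)`. -/
def h1 (n : ℕ) : ℝ := if n % 2 = 0 then E1 (n / 2) else O1 (n / 2)

/-- `h_2` with `h_2(2t) = E_2(t)`, `h_2(2t+1) = O_2(t)`. -/
def h2 (n : ℕ) : ℝ := if n % 2 = 0 then E2 (n / 2) else O2 (n / 2)

/-- `g(t) = Σ_{s=0}^t h_1(s) h_2(t−s)`. -/
def g (t : ℕ) : ℝ := ∑ s ∈ Finset.range (t + 1), h1 s * h2 (t - s)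

/-- `ν(m)`. -/
def ν (m : ℕ) : ℝ :=
  2 * Real.log 6 + 2 * Real.log 2 * (m : ℝ) + 2 * (m : ℝ) * Real.log (m : ℝ) +
    2 * (m : ℝ) * Real.log (Real.log (m : ℝ)) +
    5 * (m : ℝ) * Real.log (Real.log (m : ℝ)) / Real.log (m : ℝ)

/-- `ĝ(m)`. -/
def ghat (m : ℕ) : ℝ := 1 / 24 * (36 / π ^ 2 * ν m ^ 2 + 1)

/-- `α_k = (π/6)√(24k−1)`. -/
def αk (k : ℕ) : ℝ := π / 6 * Real.sqrt (24 * (k : ℝ) - 1)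

/-- `C_1(k)`. -/
def C1 (k : ℕ) : ℝ :=
  3 * (k : ℝ) * (3 * (⌈Real.sqrt (k : ℝ)⌉₊ : ℝ) + 1) ^ 2 *
      αk k ^ (6 * ⌈Real.sqrt (k : ℝ)⌉₊ + 4) /
    (2 * (⌈Real.sqrt (k : ℝ)⌉₊ : ℝ) * (Nat.factorial (6 * ⌈Real.sqrt (k : ℝ)⌉₊ + 4) : ℝ))

/-- `C_1*(k)`. -/
def C1s (k : ℕ) : ℝ :=
  (αk k ^ 2 * (Real.cosh (αk k) - 1) + 4 * C1 k) / (4 * |Real.cos (αk k)|)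

/-- `C_2(k)`. -/
def C2 (k : ℕ) : ℝ :=
  9 * (k : ℝ) * (3 * (⌈Real.sqrt (k : ℝ)⌉₊ : ℝ) + 1) ^ 2 *
      αk k ^ (6 * ⌈Real.sqrt (k : ℝ)⌉₊ + 3) /
    ((6 * (⌈Real.sqrt (k : ℝ)⌉₊ : ℝ) + 1) * (Nat.factorial (6 * ⌈Real.sqrt (k : ℝ)⌉₊ + 3) : ℝ))

/-- `C_2*(k)`. -/
def C2s (k : ℕ) : ℝ :=
  1 / 2 * (1 + 3 * (αk k ^ 2 * Real.sinh (αk k) + 4 * C2 k) / (4 * |Real.sin (αk k)|))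

/-- `C_e(k)`. -/
def Ce (k : ℕ) : ℝ := 2 * C2s k + (24 * (k : ℝ) - 1) * (1 + C2s k) / 6

/-- `C_o(k)`. -/
def Co (k : ℕ) : ℝ := 2 * C1s k + (24 * (k : ℝ) - 1) * (1 + 2 * C1s k) / 6

/-- `E_{N,1,e}(k)`. -/
def EN1e (N k : ℕ) : ℝ :=
  Real.sqrt 2 * |Real.sin (αk k)| / (Real.sqrt π * αk k) *
    ((24 * (k : ℝ) - 1) / 24) ^ (((N : ℝ) + 1) / 2) * Real.sqrt ((N : ℝ) + 1) *
    (1 + Ce k / (N : ℝ))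

/-- `E_{N,1,o}(k)`. -/
def EN1o (N k : ℕ) : ℝ :=
  Real.sqrt (3 / π ^ 3) * |Real.cos (αk k)| *
    ((24 * (k : ℝ) - 1) / 24) ^ ((N : ℝ) / 2) * Real.sqrt ((N : ℝ) + 2) *
    (1 + Co k / (N : ℝ))

/-- `E_{N,1}(k)`. -/
def EN1 (N k : ℕ) : ℝ := EN1e N k + EN1o N k

/-- `C_1(α)`. -/
def Cal1 : ℝ :=
  3 * (Real.cosh (Real.sqrt (1 + αc ^ 2) - 1) + Real.sinh (Real.sqrt (1 + αc ^ 2) - 1)) /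
    (2 * π ^ 2 * (1 + αc ^ 2))

/-- `C_2(α)`. -/
def Cal2 : ℝ :=
  1 / π * Real.sqrt (3 / 2) *
    (Real.cosh (Real.sqrt (1 + αc ^ 2) - 1) + Real.sinh (Real.sqrt (1 + αc ^ 2) - 1)) /
    (1 + αc ^ 2) ^ ((3 : ℝ) / 2)

/-- `E_N^{[2]}`. -/
def EN2 (N : ℕ) : ℝ :=
  Cal1 * ((1 + αc ^ 2) / (24 * αc ^ 2)) ^ (((N : ℝ) - 1) / 2) * (1 + 8 / (N : ℝ)) +
  Cal2 * ((1 + αc ^ 2) / (24 * αc ^ 2)) ^ ((N : ℝ) / 2) * (1 + 3 / (N : ℝ)) +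
  (6 / (π * Real.sqrt 24)) ^ (N + 1) * (1 + 4 / (N : ℝ))

/-- Coefficients `c_k(m) = Σ_{s=0}^m ω_k(s) g(m−s)`. -/
def ck (k m : ℕ) : ℝ := ∑ s ∈ Finset.range (m + 1), ω k s * g (m - s)

open Nat

theorem Nat.centralBinom_le_four_pow_div_sqrt {n : ℕ} (hn : n ≠ 0) :
    (n.centralBinom : ℝ) ≤ 4 ^ n / √(π * n) := by
  have hc : ((2 * n)! : ℝ) = n.centralBinom * (n ! * n !) := by
    have h := Nat.choose_mul_factorial_mul_factorial (show n ≤ 2 * n by omega)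
    rw [show 2 * n - n = n by omega, ← Nat.centralBinom_eq_two_mul_choose] at h
    rw [← h]; push_cast; ring
  have hW := Real.Wallis.le_W n
  rw [Real.Wallis.W_eq_factorial_ratio, hc] at hW
  have hb : (0 : ℝ) < n.centralBinom := by exact_mod_cast n.centralBinom_pos
  have hsq : (n.centralBinom : ℝ) ^ 2 * (π * n) ≤ (4 ^ n) ^ 2 := by
    have h16 : (2 : ℝ) ^ (4 * n) * n ! ^ 4 / ((n.centralBinom * (n ! * n !)) ^ 2 * (2 * n + 1))
        = (4 ^ n) ^ 2 / (n.centralBinom ^ 2 * (2 * n + 1)) := by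
      field_simp
      rw [← pow_mul, show (4 : ℝ) = 2 ^ 2 by norm_num, ← pow_mul]
      ring_nf
    rw [h16, le_div_iff₀ (by positivity)] at hW
    have hkey : π * n ≤ (2 * n + 1) / (2 * n + 2) * (π / 2) * (2 * n + 1) := by
      rw [div_mul_eq_mul_div, div_mul_eq_mul_div, le_div_iff₀ (by positivity)]
      nlinarith [Real.pi_pos]
    calc (n.centralBinom : ℝ) ^ 2 * (π * n)
        ≤ n.centralBinom ^ 2 * ((2 * n + 1) / (2 * n + 2) * (π / 2) * (2 * n + 1)) := by gcongr
      _ = (2 * n + 1) / (2 * n + 2) * (π / 2) * (n.centralBinom ^ 2 * (2 * n + 1)) := by ring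
      _ ≤ (4 ^ n) ^ 2 := hW
  rw [le_div_iff₀ (by positivity), ← Real.sqrt_sq hb.le, ← Real.sqrt_mul (by positivity),
    ← Real.sqrt_sq (by positivity : (0 : ℝ) ≤ 4 ^ n)]
  exact Real.sqrt_le_sqrt hsq

theorem sq_mul_cosh_sub_one_nonneg (a : ℝ) : 0 ≤ a ^ 2 * (cosh a - 1) :=
  mul_nonneg (sq_nonneg a) (sub_nonneg.mpr (Real.one_le_cosh a))

theorem HasSum.abs_le_sq_mul_cosh_sub_one {a K s : ℝ} {e : ℕ → ℝ}
    (he : ∀ m : ℕ, |e m| ≤ K * (m * (m - 1)))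
    (hs : HasSum (fun m ↦ e m * (a ^ (2 * m) / (2 * m)!)) s) :
    |s| ≤ K / 4 * a ^ 2 * (cosh a - 1) := by
  have hK : 0 ≤ K := by
    have h2 := (abs_nonneg _).trans (he 2)
    norm_num at h2
    linarith
  have he0 : e 0 = 0 := abs_nonpos_iff.mp (by simpa using he 0)
  have he1 : e 1 = 0 := abs_nonpos_iff.mp (by simpa using he 1)
  have hs₂ : HasSum (fun j ↦ e (j + 2) * (a ^ (2 * (j + 2)) / (2 * (j + 2))!)) s := by
    simpa [Finset.sum_range_succ, he0, he1] using (hasSum_nat_add_iff' 2).mpr hs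
  have hcosh : HasSum (fun j ↦ a ^ (2 * (j + 1)) / (2 * (j + 1))!) (cosh a - 1) := by
    simpa using (hasSum_nat_add_iff' 1).mpr (Real.hasSum_cosh a)
  refine hs₂.norm_le_of_bounded (hcosh.mul_left (K / 4 * a ^ 2)) fun j ↦ ?_
  have hfact : ((2 * (j + 2))! : ℝ) = (2 * (j + 1))! * ((2 * j + 3) * (2 * j + 4)) := by
    rw [show 2 * (j + 2) = 2 * (j + 1) + 1 + 1 by ring, Nat.factorial_succ, Nat.factorial_succ]
    push_cast; ring
  have hpow : a ^ (2 * (j + 2)) = a ^ 2 * a ^ (2 * (j + 1)) := by ring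
  have hx : 0 ≤ a ^ (2 * (j + 1)) := (even_two_mul _).pow_nonneg a
  rw [Real.norm_eq_abs, abs_mul, hfact, hpow, abs_of_nonneg (a := _ / _) (by positivity)]
  have hej := he (j + 2)
  push_cast at hej
  calc |e (j + 2)| * (a ^ 2 * a ^ (2 * (j + 1)) / ((2 * (j + 1))! * ((2 * j + 3) * (2 * j + 4))))
      = |e (j + 2)| / ((2 * j + 3) * (2 * j + 4)) *
          (a ^ 2 * a ^ (2 * (j + 1)) / (2 * (j + 1))!) := by
        field_simp
    _ ≤ K / 4 * (a ^ 2 * a ^ (2 * (j + 1)) / (2 * (j + 1))!) := by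
        refine mul_le_mul_of_nonneg_right ?_ (by positivity)
        rw [div_le_iff₀ (by positivity)]
        nlinarith
    _ = K / 4 * a ^ 2 * (a ^ (2 * (j + 1)) / (2 * (j + 1))!) := by ring

theorem zpow_sub_two_mul_mul_zpow_neg {K : Type*} [Field K] {y : K} (hy : y ≠ 0) (X : K)
    (n l : ℕ) :
    y ^ ((n : ℤ) - 2 * l) * X ^ (-(l : ℤ)) = y ^ n * (y ^ 2 * X)⁻¹ ^ l := by
  rw [zpow_sub₀ hy, zpow_neg, zpow_natCast, zpow_natCast,
    show (2 * l : ℤ) = ((2 * l : ℕ) : ℤ) by push_cast; ring, zpow_natCast, pow_mul]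
  ring

namespace OmegaOdd

lemma twentyFour_mul_sub_one_pos {k : ℕ} (hk : 0 < k) : (0 : ℝ) < 24 * k - 1 := by
  have : (1 : ℝ) ≤ k := by exact_mod_cast hk
  linarith

-- `C(2N, N+m)` rather than `C(2N, N-m)`, so that the weight vanishes for `m > N`.
def weight (N m : ℕ) : ℕ := (2 * N).choose (N + m) * (N + m)

lemma weight_succ (N m : ℕ) : weight N (m + 1) = (2 * N).choose (N + m) * (N - m) := by
  rw [weight, ← add_assoc, Nat.choose_succ_right_eq, show 2 * N - (N + m) = N - m by omega]

lemma weight_succ_le (N m : ℕ) : weight N (m + 1) ≤ weight N m := by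
  rw [weight_succ, weight]; gcongr; omega

lemma weight_le_succ_add (N m : ℕ) :
    weight N m ≤ weight N (m + 1) + 2 * m * N.centralBinom := by
  rw [weight_succ, weight]
  calc (2 * N).choose (N + m) * (N + m) ≤ (2 * N).choose (N + m) * (N - m + 2 * m) :=
        Nat.mul_le_mul_left _ (by omega)
    _ ≤ (2 * N).choose (N + m) * (N - m) + 2 * m * N.centralBinom := by
        rw [mul_add, mul_comm _ (2 * m)]
        gcongr
        exact Nat.choose_le_centralBinom _ _

-- `b_0 - b_m ≤ C(2N, N) m (m - 1)`, written without truncated subtraction.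
lemma weight_zero_add_le (N m : ℕ) :
    weight N 0 + N.centralBinom * m ≤ weight N m + N.centralBinom * m ^ 2 := by
  induction m with
  | zero => simp
  | succ m ih => nlinarith [weight_le_succ_add N m]

lemma weight_zero (N : ℕ) : weight N 0 = N.centralBinom * N := by
  rw [weight, add_zero, Nat.centralBinom_eq_two_mul_choose]

lemma weight_eq_zero {N m : ℕ} (h : N < m) : weight N m = 0 := by
  rw [weight, Nat.choose_eq_zero_of_lt (by omega), zero_mul]

lemma weight_le_weight_zero (N m : ℕ) : weight N m ≤ weight N 0 :=
  antitone_nat_of_succ_le (weight_succ_le N) (Nat.zero_le m)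

lemma abs_sum_weight_le (N : ℕ) (a : ℝ) :
    |∑ m ∈ range (N + 1), (-1) ^ m * (weight N m : ℝ) * (a ^ (2 * m) / (2 * m)!)| ≤
      N.centralBinom * (N * |cos a| + a ^ 2 * (cosh a - 1) / 4) := by
  set S := ∑ m ∈ range (N + 1), (-1) ^ m * (weight N m : ℝ) * (a ^ (2 * m) / (2 * m)!)
  have hB : (weight N 0 : ℝ) = N.centralBinom * N := by exact_mod_cast weight_zero N
  have hfin : HasSum (fun m ↦ (-1) ^ m * (weight N m : ℝ) * (a ^ (2 * m) / (2 * m)!)) S :=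
    hasSum_sum_of_ne_finset_zero fun m hm ↦ by simp [weight_eq_zero (by simpa using hm)]
  have hdiff := ((Real.hasSum_cos a).mul_left (weight N 0 : ℝ)).sub hfin
  have htail : |weight N 0 * cos a - S| ≤ N.centralBinom / 4 * a ^ 2 * (cosh a - 1) := by
    refine HasSum.abs_le_sq_mul_cosh_sub_one
      (e := fun m ↦ (-1) ^ m * ((weight N 0 : ℝ) - weight N m)) (fun m ↦ ?_) ?_
    · have hle : (weight N m : ℝ) ≤ weight N 0 := by exact_mod_cast weight_le_weight_zero N m
      have hgap : (weight N 0 : ℝ) + N.centralBinom * m ≤ weight N m + N.centralBinom * m ^ 2 :=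
        mod_cast weight_zero_add_le N m
      rw [abs_mul, abs_pow, abs_neg, abs_one, one_pow, one_mul, abs_of_nonneg (by linarith)]
      nlinarith
    · have hfun :
          (fun m : ℕ ↦ (-1) ^ m * ((weight N 0 : ℝ) - weight N m) * (a ^ (2 * m) / (2 * m)!))
          = fun m ↦ (weight N 0 : ℝ) * ((-1) ^ m * a ^ (2 * m) / (2 * m)!)
            - (-1) ^ m * weight N m * (a ^ (2 * m) / (2 * m)!) :=
        funext fun m ↦ by ring
      rw [hfun]
      exact hdiff
  have htri := abs_sub_abs_le_abs_sub S (weight N 0 * cos a)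
  rw [abs_mul, Nat.abs_cast, abs_sub_comm] at htri
  rw [hB] at htail htri
  nlinarith

def prefactor (X : ℝ) (t : ℕ) : ℝ :=
  (X / (4 * √6)) ^ (2 * t + 1) * (π / 6) ^ (2 * t + 1) * ((π / 6) ^ 2 * X)⁻¹ ^ (t + 1)

lemma prefactor_nonneg {X : ℝ} (hX : 0 ≤ X) (t : ℕ) : 0 ≤ prefactor X t := by
  unfold prefactor; positivity

theorem ω_odd_eq {k : ℕ} (hk : 0 < k) (t : ℕ) :
    ω k (2 * t + 1) = prefactor (24 * k - 1) t * ((-1) ^ (t + 1) * ∑ m ∈ range (t + 2),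
      (-1) ^ m * (weight (t + 1) m : ℝ) * (αk k ^ (2 * m) / (2 * m)!)) := by
  have hX := twentyFour_mul_sub_one_pos hk
  have hα : (π / 6) ^ 2 * (24 * (k : ℝ) - 1) = αk k ^ 2 := by
    rw [αk, mul_pow, Real.sq_sqrt hX.le]
  have hα0 : αk k ^ 2 ≠ 0 := by rw [← hα]; positivity
  rw [ω, prefactor, hα, show (2 * t + 1 + 1) / 2 + 1 = t + 2 by omega,
    show 2 * t + 1 + 1 = 2 * (t + 1) by ring]
  conv_lhs => rw [← sum_range_reflect]
  rw [mul_sum, mul_sum, mul_sum]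
  refine sum_congr rfl fun m hm ↦ ?_
  have hm : m ≤ t + 1 := by simp at hm; omega
  rw [show t + 2 - 1 - m = t + 1 - m by omega, show 2 * (t + 1) - (t + 1 - m) = t + 1 + m by omega,
    show 2 * (t + 1) - 2 * (t + 1 - m) = 2 * m by omega,
    Nat.choose_symm_of_eq_add (show 2 * (t + 1) = (t + 1 - m) + (t + 1 + m) by omega),
    mul_assoc _ ((π / 6 : ℝ) ^ _), zpow_sub_two_mul_mul_zpow_neg (by positivity), hα]
  have hsign : ((-1 : ℝ) ^ m)⁻¹ = (-1) ^ m := by rw [← inv_pow, inv_neg_one]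
  have hα2m : ((αk k ^ 2)⁻¹ ^ m)⁻¹ = αk k ^ (2 * m) := by rw [inv_pow, inv_inv, pow_mul]
  rw [pow_sub₀ _ (by norm_num) hm, pow_sub₀ _ (inv_ne_zero hα0) hm, hsign, hα2m, weight]
  push_cast
  ring

lemma prefactor_mul_four_pow_div_sqrt_pi {X : ℝ} (hX : 0 < X) (t : ℕ) :
    prefactor X t * 4 ^ (t + 1) / √π = (X / 24) ^ t * √(6 / π ^ 3) := by
  have h6 : √6 ^ 2 = 6 := Real.sq_sqrt (by norm_num)
  have hsqrt : √(6 / π ^ 3) = √6 / (π * √π) := by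
    rw [Real.sqrt_div' _ (by positivity), show π ^ 3 = π ^ 2 * π by ring,
      Real.sqrt_mul (by positivity), Real.sqrt_sq Real.pi_pos.le]
  have hbase : (X / (4 * √6)) ^ 2 * (π / 6) ^ 2 * ((π / 6) ^ 2 * X)⁻¹ * 4 = X / 24 := by
    field_simp
    rw [h6]
    ring
  have hsplit : ∀ A B C D : ℝ,
      A ^ (2 * t + 1) * B ^ (2 * t + 1) * C ^ (t + 1) * D ^ (t + 1) / √π
        = (A ^ 2 * B ^ 2 * C * D) ^ t * (A * B * C * D / √π) := fun A B C D ↦ by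
    rw [mul_pow, mul_pow, mul_pow]; ring
  rw [prefactor, hsplit, hbase, hsqrt]
  congr 1
  field_simp
  rw [h6]

lemma prefactor_mul_centralBinom_le {X : ℝ} (hX : 0 < X) (t : ℕ) :
    prefactor X t * ((t + 1).centralBinom * (t + 1)) ≤
      (X / 24) ^ t * √(6 / π ^ 3) * √(t + 1) := by
  have hcentral := Nat.centralBinom_le_four_pow_div_sqrt (n := t + 1) (by omega)
  have hsqrt : √(π * ((t + 1 : ℕ) : ℝ)) = √π * √((t : ℝ) + 1) := by
    push_cast; exact Real.sqrt_mul Real.pi_pos.le _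
  have hs : √((t : ℝ) + 1) ^ 2 = t + 1 := Real.sq_sqrt (by positivity)
  calc prefactor X t * ((t + 1).centralBinom * (t + 1))
      ≤ prefactor X t * (4 ^ (t + 1) / √(π * ((t + 1 : ℕ) : ℝ)) * (t + 1)) := by
        gcongr
        exact prefactor_nonneg hX.le t
    _ = prefactor X t * 4 ^ (t + 1) / √π * √((t : ℝ) + 1) := by
        rw [hsqrt]
        field_simp
        rw [hs]
    _ = _ := by rw [prefactor_mul_four_pow_div_sqrt_pi hX]

lemma cos_αk_ne_zero {k : ℕ} (hk : 0 < k) : cos (αk k) ≠ 0 := by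
  intro h
  obtain ⟨m, hm⟩ := Real.cos_eq_zero_iff.mp h
  have hX := (twentyFour_mul_sub_one_pos hk).le
  have hsqrt : √(24 * (k : ℝ) - 1) = 3 * (2 * m + 1) := by
    rw [αk] at hm
    field_simp at hm
    linarith [Real.pi_pos]
  have hsq : (24 * (k : ℝ) - 1) = 9 * (2 * m + 1) ^ 2 := by
    rw [← Real.sq_sqrt hX, hsqrt]; ring
  have hint : 24 * (k : ℤ) - 1 = 3 * (3 * (2 * m + 1) ^ 2) := by
    rw [← mul_assoc]; exact_mod_cast hsq
  omega

lemma C1_nonneg (k : ℕ) : 0 ≤ C1 k := by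
  unfold C1 αk; positivity

lemma C1s_nonneg (k : ℕ) : 0 ≤ C1s k := by
  unfold C1s
  have := sq_mul_cosh_sub_one_nonneg (αk k)
  have := C1_nonneg k
  positivity

lemma succ_mul_abs_cos_add_le_C1s {k t : ℕ} (hk : 0 < k) (ht : 0 < t) :
    (t + 1) * |cos (αk k)| + αk k ^ 2 * (cosh (αk k) - 1) / 4 ≤
      (t + 1) * (|cos (αk k)| * (1 + C1s k / t)) := by
  have hcos : 0 < |cos (αk k)| := abs_pos.mpr (cos_αk_ne_zero hk)
  have hC1 := C1_nonneg k
  have hcosh := sq_mul_cosh_sub_one_nonneg (αk k)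
  have ht' : (1 : ℝ) ≤ t := by exact_mod_cast ht
  have hratio : (1 : ℝ) ≤ (t + 1) / t := by rw [le_div_iff₀ (by positivity)]; linarith
  have hexpand : (t + 1) * (|cos (αk k)| * (1 + C1s k / t)) = (t + 1) * |cos (αk k)| +
      (t + 1) / t * ((αk k ^ 2 * (cosh (αk k) - 1) + 4 * C1 k) / 4) := by
    rw [C1s]; field_simp
  rw [hexpand]
  nlinarith

end OmegaOdd

open OmegaOdd in
/-- bound on the odd-index coefficients `ω_k(2t+1)`. -/
theorem omega_odd_bound (k t : ℕ) (hk : 0 < k) (ht : 0 < t) :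
    |ω k (2 * t + 1)| ≤
      ((24 * (k : ℝ) - 1) / 24) ^ t * Real.sqrt (6 / π ^ 3) * Real.sqrt ((t : ℝ) + 1) *
        |Real.cos (αk k)| * (1 + C1s k / (t : ℝ)) := by
  have hX := twentyFour_mul_sub_one_pos hk
  have hQ := prefactor_nonneg hX.le t
  calc |ω k (2 * t + 1)|
      = prefactor (24 * k - 1) t * |∑ m ∈ range (t + 2),
          (-1) ^ m * (weight (t + 1) m : ℝ) * (αk k ^ (2 * m) / (2 * m)!)| := by
        rw [ω_odd_eq hk, abs_mul, abs_mul ((-1) ^ (t + 1)), abs_neg_one_pow, one_mul,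
          abs_of_nonneg hQ]
    _ ≤ prefactor (24 * k - 1) t * ((t + 1).centralBinom *
          ((t + 1) * |cos (αk k)| + αk k ^ 2 * (cosh (αk k) - 1) / 4)) := by
        gcongr
        exact_mod_cast abs_sum_weight_le (t + 1) (αk k)
    _ ≤ prefactor (24 * k - 1) t * ((t + 1).centralBinom *
          ((t + 1) * (|cos (αk k)| * (1 + C1s k / t)))) := by
        gcongr
        exact succ_mul_abs_cos_add_le_C1s hk ht
    _ = prefactor (24 * k - 1) t * ((t + 1).centralBinom * (t + 1)) *
          (|cos (αk k)| * (1 + C1s k / t)) := by ring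
    _ ≤ ((24 * k - 1) / 24) ^ t * √(6 / π ^ 3) * √(t + 1) *
          (|cos (αk k)| * (1 + C1s k / t)) := by
        have := C1s_nonneg k
        exact mul_le_mul_of_nonneg_right (prefactor_mul_centralBinom_le hX t) (by positivity)
    _ = _ := by ring
end
end

section
/- Let k and t be positive integers. Then |ω_k(2t)| ≤ ((24k−1)/24)^t·(2√t/(√π·α_k))·|sin α_k|·(1 + C_2*(k)/t), where C_2*(k) := (1/2)·(1 + 3·(α_k²·sinh α_k + 4·C_2(k))/(4·|sin α_k|)) and C_2(k) := 9k·(3⌈√k⌉+1)²·α_k^{6⌈√k⌉+3}/((6⌈√k⌉+1)·(6⌈√k⌉+3)!). -/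
open Real BigOperators Finset

noncomputable section

/-!
Put `w = 24k - 1` and `α = α_k`, so that `α² = (π/6)² w`. Reflecting the summation index, the
defining sum becomes
`ω_k(2t) = (-1)^t (w/24)^t / (4^t α) · Σ_{m ≤ t} D_m (-1)^m α^(2m+1) / (2m+1)!`
with `D_m = (t+1+m) C(2t+1, t-m)` (`omegaCoeff`). The differences
`D_m - D_{m+1} = (2m+1) C(2t+1, t-m)` (`omegaCoeffStep`) are nonnegative, so Abel summation
expresses the sum through the Taylor polynomials `S_i` of `sin` at `α`: the main term is
`D_0 sin α` with `D_0 = (2t+1) C(2t, t)`, and the remainders `|sin α - S_i(α)| ≤ α^(2i+3) / (2i+3)!`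
add up to at most `C(2t+1, t) α² sinh α / 3`. Finally `C(2t, t) ≤ 4^t / √(πt)` because the
Stirling sequence `n! / (√(2n) (n/e)^n)` decreases to `√π`.
-/

open Nat

theorem abs_le_pow_div_factorial_of_hasDerivAt {f f' : ℝ → ℝ} (hf : ∀ x, HasDerivAt f (f' x) x)
    (h0 : f 0 = 0) {n : ℕ} (hf' : ∀ y, 0 ≤ y → |f' y| ≤ y ^ n / n !) {x : ℝ} (hx : 0 ≤ x) :
    |f x| ≤ x ^ (n + 1) / (n + 1)! := by
  have hB (y : ℝ) : HasDerivAt (fun y : ℝ ↦ y ^ (n + 1) / (n + 1)!) (y ^ n / n !) y := by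
    refine ((hasDerivAt_pow (n + 1) y).div_const ((n + 1)! : ℝ)).congr_deriv ?_
    push_cast [Nat.factorial_succ]
    field_simp
  exact image_norm_le_of_norm_deriv_right_le_deriv_boundary (a := 0) (b := x)
    (fun y _ ↦ (hf y).continuousAt.continuousWithinAt) (fun y _ ↦ (hf y).hasDerivWithinAt)
    (by simp [h0]) hB (fun y hy ↦ hf' y hy.1) ⟨hx, le_rfl⟩

def sinTaylor (N : ℕ) (x : ℝ) : ℝ := ∑ m ∈ range N, (-1) ^ m * x ^ (2 * m + 1) / (2 * m + 1)!

def cosTaylor (N : ℕ) (x : ℝ) : ℝ := ∑ m ∈ range N, (-1) ^ m * x ^ (2 * m) / (2 * m)!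

theorem hasDerivAt_sinTaylor (N : ℕ) (x : ℝ) : HasDerivAt (sinTaylor N) (cosTaylor N x) x := by
  unfold sinTaylor cosTaylor
  refine HasDerivAt.fun_sum fun m _ ↦ ?_
  refine (((hasDerivAt_pow (2 * m + 1) x).const_mul ((-1 : ℝ) ^ m)).div_const
    ((2 * m + 1)! : ℝ)).congr_deriv ?_
  push_cast [Nat.factorial_succ]
  field_simp

theorem hasDerivAt_cosTaylor_succ (N : ℕ) (x : ℝ) :
    HasDerivAt (cosTaylor (N + 1)) (-sinTaylor N x) x := by
  unfold sinTaylor cosTaylor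
  refine (HasDerivAt.fun_sum fun m (_ : m ∈ range (N + 1)) ↦
    ((hasDerivAt_pow (2 * m) x).const_mul ((-1 : ℝ) ^ m)).div_const ((2 * m)! : ℝ)).congr_deriv ?_
  rw [sum_range_succ', ← sum_neg_distrib]
  simp only [mul_zero, Nat.cast_zero, zero_mul, zero_div, add_zero]
  refine sum_congr rfl fun m _ ↦ ?_
  rw [show 2 * (m + 1) = 2 * m + 1 + 1 by ring, Nat.factorial_succ, Nat.add_sub_cancel, pow_succ]
  push_cast
  field_simp

theorem abs_sin_sub_sinTaylor_le_of_cos {N : ℕ}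
    (hcos : ∀ y, 0 ≤ y → |cos y - cosTaylor N y| ≤ y ^ (2 * N) / (2 * N)!) {x : ℝ} (hx : 0 ≤ x) :
    |sin x - sinTaylor N x| ≤ x ^ (2 * N + 1) / (2 * N + 1)! :=
  abs_le_pow_div_factorial_of_hasDerivAt (fun y ↦ (hasDerivAt_sin y).sub (hasDerivAt_sinTaylor N y))
    (by simp [sinTaylor]) hcos hx

theorem abs_cos_sub_cosTaylor_le (N : ℕ) {x : ℝ} (hx : 0 ≤ x) :
    |cos x - cosTaylor N x| ≤ x ^ (2 * N) / (2 * N)! := by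
  induction N generalizing x with
  | zero => simpa [cosTaylor] using abs_cos_le_one x
  | succ N ih =>
    have h := abs_le_pow_div_factorial_of_hasDerivAt (f' := fun y ↦ -(sin y - sinTaylor N y))
      (fun y ↦ ((hasDerivAt_cos y).sub (hasDerivAt_cosTaylor_succ N y)).congr_deriv (by ring))
      (by simp [cosTaylor, sum_range_succ']) (fun y hy ↦ by
        rw [abs_neg]; exact abs_sin_sub_sinTaylor_le_of_cos (fun _ ↦ ih) hy) hx
    rwa [show 2 * N + 1 + 1 = 2 * (N + 1) by ring] at h

theorem abs_sin_sub_sinTaylor_le (N : ℕ) {x : ℝ} (hx : 0 ≤ x) :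
    |sin x - sinTaylor N x| ≤ x ^ (2 * N + 1) / (2 * N + 1)! :=
  abs_sin_sub_sinTaylor_le_of_cos (fun _ ↦ abs_cos_sub_cosTaylor_le N) hx

theorem Nat.centralBinom_le_four_pow_div_sqrt_pi_mul {n : ℕ} (hn : n ≠ 0) :
    (centralBinom n : ℝ) ≤ 4 ^ n / √(π * n) := by
  set a := Stirling.stirlingSeq
  have hn' : (0 : ℝ) < n := by positivity
  have hfact (m : ℕ) (hm : m ≠ 0) : (m ! : ℝ) = a m * (√(2 * m) * (m / exp 1) ^ m) := by
    have : 0 < √(2 * m : ℝ) * (m / exp 1) ^ m := by positivity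
    simp only [a, Stirling.stirlingSeq]
    field_simp
  have hchoose : (centralBinom n : ℝ) * n ! * n ! = (2 * n)! := by
    have := Nat.choose_mul_factorial_mul_factorial (show n ≤ 2 * n by omega)
    rw [show 2 * n - n = n by omega] at this
    exact_mod_cast this
  set Q := ((n : ℝ) / exp 1) ^ n
  have key : (centralBinom n : ℝ) * a n ^ 2 * √n = a (2 * n) * 4 ^ n := by
    have h4n : √(2 * ((2 * n : ℕ) : ℝ)) = 2 * √n := by
      rw [show 2 * ((2 * n : ℕ) : ℝ) = 2 ^ 2 * n by push_cast; ring, Real.sqrt_mul (by positivity),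
        Real.sqrt_sq (by norm_num)]
    have hpow : (((2 * n : ℕ) : ℝ) / exp 1) ^ (2 * n) = 4 ^ n * Q ^ 2 := by
      rw [show ((2 * n : ℕ) : ℝ) / exp 1 = 2 * (n / exp 1) by push_cast; ring, mul_pow,
        pow_mul (2 : ℝ) 2 n, pow_mul' ((n : ℝ) / exp 1) 2 n]
      norm_num [Q]
    have h2n : √(2 * (n : ℝ)) ^ 2 = 2 * √n * √n := by
      rw [Real.sq_sqrt (by positivity), mul_assoc, Real.mul_self_sqrt hn'.le]
    rw [hfact n hn, hfact (2 * n) (by omega), h4n, hpow] at hchoose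
    apply mul_left_cancel₀ (show 2 * √n * Q ^ 2 ≠ 0 by positivity)
    linear_combination hchoose - centralBinom n * a n ^ 2 * Q ^ 2 * h2n
  have hπa : √π ≤ a n := Stirling.sqrt_pi_le_stirlingSeq hn
  have ha : a (2 * n) ≤ a n := by
    obtain ⟨m, rfl⟩ := Nat.exists_eq_succ_of_ne_zero hn
    exact Stirling.stirlingSeq'_antitone (show m ≤ 2 * m + 1 by omega)
  have hapos : 0 < a n := (Real.sqrt_pos.2 Real.pi_pos).trans_le hπa
  have hCa : centralBinom n * √n * a n ≤ 4 ^ n := by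
    refine le_of_mul_le_mul_right ?_ hapos
    nlinarith [mul_le_mul_of_nonneg_right ha (show (0 : ℝ) ≤ 4 ^ n by positivity)]
  rw [Real.sqrt_mul Real.pi_pos.le, le_div_iff₀ (by positivity)]
  nlinarith [mul_le_mul_of_nonneg_left hπa (show (0 : ℝ) ≤ centralBinom n * √n by positivity)]

theorem Nat.succ_mul_choose_two_mul_add_one (t : ℕ) :
    (t + 1) * (2 * t + 1).choose t = (2 * t + 1) * t.centralBinom := by
  rw [Nat.centralBinom_eq_two_mul_choose, Nat.add_one_mul_choose_eq, Nat.choose_symm_half, mul_comm]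

theorem Nat.choose_two_mul_add_one_le_two_mul_centralBinom (t : ℕ) :
    (2 * t + 1).choose t ≤ 2 * t.centralBinom := by
  have := succ_mul_choose_two_mul_add_one t
  nlinarith

theorem Finset.sum_range_mul_eq_sum_mul_sum_range {R : Type*} [CommSemiring R] {n : ℕ}
    {D E g : ℕ → R} (hD : ∀ m < n, D m = ∑ i ∈ Ico m n, E i) :
    ∑ m ∈ range n, D m * g m = ∑ i ∈ range n, E i * ∑ j ∈ range (i + 1), g j := by
  calc ∑ m ∈ range n, D m * g m = ∑ m ∈ Ico 0 n, ∑ i ∈ Ico m n, E i * g m := by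
        rw [← range_eq_Ico]
        exact sum_congr rfl fun m hm ↦ by rw [hD m (mem_range.1 hm), sum_mul]
    _ = ∑ i ∈ range n, E i * ∑ j ∈ range (i + 1), g j := by
        rw [sum_Ico_Ico_comm, ← range_eq_Ico]
        simp only [← range_eq_Ico, mul_sum]

def omegaCoeff (t m : ℕ) : ℕ := (t + 1 + m) * (2 * t + 1).choose (t - m)

def omegaCoeffStep (t m : ℕ) : ℕ := (2 * m + 1) * (2 * t + 1).choose (t - m)

theorem omegaCoeff_eq_add {t m : ℕ} (h : m < t) :
    omegaCoeff t m = omegaCoeffStep t m + omegaCoeff t (m + 1) := by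
  have h1 := Nat.choose_succ_right_eq (2 * t + 1) (t - (m + 1))
  rw [show t - (m + 1) + 1 = t - m by omega,
    show 2 * t + 1 - (t - (m + 1)) = t + 1 + (m + 1) by omega] at h1
  simp only [omegaCoeff, omegaCoeffStep]
  rw [show t + 1 + m = 2 * m + 1 + (t - m) by omega, add_mul, mul_comm (t - m), h1]
  ring

theorem omegaCoeff_eq_sum {t m : ℕ} (h : m ≤ t) :
    omegaCoeff t m = ∑ i ∈ Ico m (t + 1), omegaCoeffStep t i := by
  induction hd : t - m generalizing m with
  | zero =>
    obtain rfl : m = t := by omega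
    simp only [omegaCoeff, omegaCoeffStep, tsub_self, choose_zero_right, mul_one,
      Ico_succ_singleton, sum_singleton]
    ring
  | succ d ih =>
    rw [omegaCoeff_eq_add (by omega), ih (by omega) (by omega)]
    exact (sum_eq_sum_Ico_succ_bot (by omega) _).symm

theorem omegaCoeff_zero (t : ℕ) : omegaCoeff t 0 = (t + 1) * (2 * t + 1).choose t := by
  simp [omegaCoeff]

theorem omegaCoeffStep_le (t i : ℕ) : omegaCoeffStep t i ≤ (2 * i + 1) * (2 * t + 1).choose t := by
  have := Nat.choose_le_middle (t - i) (2 * t + 1)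
  rw [show (2 * t + 1) / 2 = t by omega] at this
  exact Nat.mul_le_mul_left _ this

theorem odd_mul_pow_div_factorial_le (i : ℕ) {x : ℝ} (hx : 0 ≤ x) :
    (2 * i + 1) * (x ^ (2 * i + 3) / (2 * i + 3)!) ≤
      x ^ 2 / 3 * (x ^ (2 * i + 1) / (2 * i + 1)!) := by
  have hfact : ((2 * i + 3)! : ℝ) = (2 * i + 3) * (2 * i + 2) * (2 * i + 1)! := by
    push_cast [show 2 * i + 3 = 2 * i + 1 + 1 + 1 by ring, Nat.factorial_succ]
    ring
  have hratio : (2 * i + 1 : ℝ) / ((2 * i + 3) * (2 * i + 2)) ≤ 1 / 3 := by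
    rw [div_le_iff₀ (by positivity)]
    nlinarith
  calc (2 * i + 1) * (x ^ (2 * i + 3) / (2 * i + 3)!)
      = (2 * i + 1 : ℝ) / ((2 * i + 3) * (2 * i + 2)) *
          (x ^ 2 * (x ^ (2 * i + 1) / (2 * i + 1)!)) := by
        rw [hfact, show 2 * i + 3 = 2 + (2 * i + 1) by ring, pow_add]
        field_simp
    _ ≤ 1 / 3 * (x ^ 2 * (x ^ (2 * i + 1) / (2 * i + 1)!)) := by gcongr
    _ = x ^ 2 / 3 * (x ^ (2 * i + 1) / (2 * i + 1)!) := by ring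

theorem abs_sum_omegaCoeff_mul_le (t : ℕ) {x : ℝ} (hx : 0 ≤ x) :
    |∑ m ∈ range (t + 1), (omegaCoeff t m : ℝ) * ((-1) ^ m * x ^ (2 * m + 1) / (2 * m + 1)!)| ≤
      ((2 * t + 1).choose t : ℝ) * ((t + 1) * |sin x| + x ^ 2 * sinh x / 3) := by
  set M : ℝ := ((2 * t + 1).choose t : ℝ) with hMdef
  set E : ℕ → ℝ := fun i ↦ (omegaCoeffStep t i : ℝ) with hEdef
  have hE (i : ℕ) : E i ≤ (2 * i + 1) * M := by
    simp only [hEdef, hMdef]; exact_mod_cast omegaCoeffStep_le t i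
  have hsumE : ∑ i ∈ range (t + 1), E i = (t + 1) * M := by
    simp only [hEdef, hMdef, range_eq_Ico]
    exact_mod_cast (omegaCoeff_eq_sum (Nat.zero_le t)).symm.trans (omegaCoeff_zero t)
  have habel :
      ∑ m ∈ range (t + 1), (omegaCoeff t m : ℝ) * ((-1) ^ m * x ^ (2 * m + 1) / (2 * m + 1)!) =
        (t + 1) * M * sin x - ∑ i ∈ range (t + 1), E i * (sin x - sinTaylor (i + 1) x) := by
    rw [sum_range_mul_eq_sum_mul_sum_range (E := E) fun m hm ↦ by
      simp only [hEdef]; exact_mod_cast omegaCoeff_eq_sum (Nat.lt_succ_iff.1 hm)]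
    simp only [mul_sub, sum_sub_distrib, ← sum_mul, hsumE, sinTaylor]
    ring
  have hsinh : ∑ i ∈ range (t + 1), x ^ (2 * i + 1) / (2 * i + 1)! ≤ sinh x :=
    sum_le_hasSum _ (fun i _ ↦ by positivity) (Real.hasSum_sinh x)
  have hM : 0 ≤ M := by positivity
  rw [habel]
  calc _ ≤ |(t + 1) * M * sin x| + |∑ i ∈ range (t + 1), E i * (sin x - sinTaylor (i + 1) x)| :=
        abs_sub _ _
    _ ≤ (t + 1) * M * |sin x| +
          ∑ i ∈ range (t + 1), M * (x ^ 2 / 3 * (x ^ (2 * i + 1) / (2 * i + 1)!)) := by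
        gcongr
        · rw [abs_mul, abs_of_nonneg (by positivity)]
        · refine (abs_sum_le_sum_abs _ _).trans (sum_le_sum fun i _ ↦ ?_)
          rw [abs_mul, abs_of_nonneg (by positivity : (0 : ℝ) ≤ E i)]
          calc E i * |sin x - sinTaylor (i + 1) x|
              ≤ (2 * i + 1) * M * (x ^ (2 * i + 3) / (2 * i + 3)!) :=
                mul_le_mul (hE i) (abs_sin_sub_sinTaylor_le (i + 1) hx) (abs_nonneg _)
                  (by positivity)
            _ ≤ _ := by
                rw [mul_comm _ M, mul_assoc]
                exact mul_le_mul_of_nonneg_left (odd_mul_pow_div_factorial_le i hx) hM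
    _ ≤ M * ((t + 1) * |sin x| + x ^ 2 * sinh x / 3) := by
        rw [← mul_sum, ← mul_sum]
        nlinarith [mul_le_mul_of_nonneg_left hsinh (show 0 ≤ M * (x ^ 2 / 3) by positivity)]

theorem twentyFour_mul_sub_one_pos {k : ℕ} (hk : 0 < k) : (0 : ℝ) < 24 * k - 1 := by
  have : (1 : ℝ) ≤ k := by exact_mod_cast hk
  linarith

theorem αk_pos {k : ℕ} (hk : 0 < k) : 0 < αk k := by
  have := Real.sqrt_pos.2 (twentyFour_mul_sub_one_pos hk)
  unfold αk
  positivity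

theorem omega_two_mul_eq {k : ℕ} (hk : 0 < k) (t : ℕ) :
    ω k (2 * t) = (-1) ^ t * ((24 * k - 1) / 24) ^ t / (4 ^ t * αk k) *
      ∑ m ∈ range (t + 1),
        (omegaCoeff t m : ℝ) * ((-1) ^ m * αk k ^ (2 * m + 1) / (2 * m + 1)!) := by
  have hα := αk_pos hk
  have hw := twentyFour_mul_sub_one_pos hk
  have hπ : (π / 6) ^ 2 = αk k ^ 2 / (24 * k - 1) := by
    rw [αk, mul_pow, Real.sq_sqrt hw.le]
    field_simp
  have h96 : (4 * √6) ^ 2 = (96 : ℝ) := by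
    rw [mul_pow, Real.sq_sqrt (by norm_num)]; norm_num
  rw [ω, show (2 * t + 1) / 2 + 1 = t + 1 by omega, mul_sum, ← sum_range_reflect, mul_sum]
  refine sum_congr rfl fun m hm ↦ ?_
  obtain ⟨d, rfl⟩ := Nat.exists_eq_add_of_le (Nat.lt_succ_iff.1 (mem_range.1 hm))
  have hsign : (-1 : ℝ) ^ d = (-1) ^ (m + d) * (-1) ^ m := by
    rw [pow_add, mul_right_comm, ← pow_add, ← two_mul, pow_mul]
    norm_num
  rw [show m + d + 1 - 1 - m = d by omega, show 2 * (m + d) + 1 - d = m + d + 1 + m by omega,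
    show 2 * (m + d) + 1 - 2 * d = 2 * m + 1 by omega,
    show ((2 * (m + d) : ℕ) : ℤ) - 2 * (d : ℤ) = ((2 * m : ℕ) : ℤ) by omega, zpow_natCast,
    zpow_neg, zpow_natCast, pow_mul, pow_mul, div_pow, h96, hπ, hsign, omegaCoeff,
    show m + d - m = d by omega]
  generalize αk k = α at hα ⊢
  generalize (24 * k - 1 : ℝ) = w at hw ⊢
  rw [show w ^ 2 / 96 = w / 24 / 4 * w by ring, mul_pow, div_pow (w / 24), pow_add w,
    div_pow (α ^ 2)]
  have := hw.ne'
  have := hα.ne'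
  push_cast
  field_simp
  ring

theorem sin_αk_ne_zero {k : ℕ} (hk : 0 < k) : sin (αk k) ≠ 0 := by
  rw [Ne, Real.sin_eq_zero_iff]
  rintro ⟨n, hn⟩
  have hw := (twentyFour_mul_sub_one_pos hk).le
  have hsqrt : √(24 * k - 1 : ℝ) = 6 * n := by
    rw [αk] at hn
    nlinarith [Real.pi_pos]
  have hsq : (24 * k - 1 : ℝ) = 36 * n ^ 2 := by
    rw [← Real.sq_sqrt hw, hsqrt]; ring
  -- `24k - 1 ≡ 3` and `36 n² ≡ 0` modulo 4
  have hz : (24 * k - 1 : ℤ) = 36 * n ^ 2 := by exact_mod_cast hsq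
  omega

theorem C2_nonneg (k : ℕ) : 0 ≤ C2 k := by
  unfold C2 αk
  positivity

theorem abs_omega_two_mul_le {k t : ℕ} (hk : 0 < k) (ht : 0 < t) :
    |ω k (2 * t)| ≤ ((24 * k - 1) / 24) ^ t / (αk k * √(π * t)) *
      ((2 * t + 1) * |sin (αk k)| + 2 * αk k ^ 2 * sinh (αk k) / 3) := by
  have hα := αk_pos hk
  have hw := twentyFour_mul_sub_one_pos hk
  have hMC : (t + 1) * ((2 * t + 1).choose t : ℝ) = (2 * t + 1) * t.centralBinom := by
    exact_mod_cast Nat.succ_mul_choose_two_mul_add_one t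
  have hM : ((2 * t + 1).choose t : ℝ) ≤ 2 * t.centralBinom := by
    exact_mod_cast Nat.choose_two_mul_add_one_le_two_mul_centralBinom t
  have hC := Nat.centralBinom_le_four_pow_div_sqrt_pi_mul ht.ne'
  set α := αk k
  set C : ℝ := (t.centralBinom : ℝ)
  set M : ℝ := ((2 * t + 1).choose t : ℝ)
  have hsinh : 0 ≤ α ^ 2 * sinh α := by have := Real.sinh_nonneg_iff.2 hα.le; positivity
  rw [omega_two_mul_eq hk, abs_mul, abs_div, abs_mul, abs_pow, abs_neg, abs_one, one_pow, one_mul,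
    abs_of_nonneg (by positivity), abs_of_pos (by positivity)]
  calc ((24 * k - 1) / 24) ^ t / (4 ^ t * α) * |_|
      ≤ ((24 * k - 1) / 24) ^ t / (4 ^ t * α) * (M * ((t + 1) * |sin α| + α ^ 2 * sinh α / 3)) := by
        gcongr
        exact abs_sum_omegaCoeff_mul_le t hα.le
    _ ≤ ((24 * k - 1) / 24) ^ t / (4 ^ t * α) *
          (C * ((2 * t + 1) * |sin α| + 2 * α ^ 2 * sinh α / 3)) := by
        refine mul_le_mul_of_nonneg_left ?_ (by positivity)
        have := congrArg (· * |sin α|) hMC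
        nlinarith [mul_le_mul_of_nonneg_right hM hsinh]
    _ ≤ ((24 * k - 1) / 24) ^ t / (4 ^ t * α) *
          (4 ^ t / √(π * t) * ((2 * t + 1) * |sin α| + 2 * α ^ 2 * sinh α / 3)) := by
        gcongr
    _ = _ := by
        field_simp

/-- bound on the even-index coefficients `ω_k(2t)`. -/
theorem omega_even_bound (k t : ℕ) (hk : 0 < k) (ht : 0 < t) :
    |ω k (2 * t)| ≤
      ((24 * (k : ℝ) - 1) / 24) ^ t * (2 * Real.sqrt (t : ℝ) / (Real.sqrt π * αk k)) *
        |Real.sin (αk k)| * (1 + C2s k / (t : ℝ)) := by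
  have hα := αk_pos hk
  have hs : 0 < |sin (αk k)| := abs_pos.2 (sin_αk_ne_zero hk)
  have hw := twentyFour_mul_sub_one_pos hk
  have hu : 0 < √(t : ℝ) := Real.sqrt_pos.2 (by exact_mod_cast ht)
  have hsq : √(t : ℝ) ^ 2 = t := Real.sq_sqrt (Nat.cast_nonneg t)
  have hslack : 0 ≤ ((24 * k - 1) / 24) ^ t / (αk k * (√π * √t)) *
      (αk k ^ 2 * sinh (αk k) / 12 + 3 * C2 k) := by
    have := C2_nonneg k; positivity
  refine (abs_omega_two_mul_le hk ht).trans ?_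
  rw [Real.sqrt_mul Real.pi_pos.le]
  generalize √(t : ℝ) = u at *
  rw [← hsq, ← sub_nonneg]
  refine hslack.trans_eq ?_
  unfold C2s
  field_simp
  ring
end
end

section
/- For every integer n ≥ 1, the two series below converge and (1 − 1/(24n))·(1 − 1/μ(n))^{−1} = Σ_{t=0}^{∞} E_2(t)·n^{−t} + Σ_{t=0}^{∞} O_2(t)·n^{−t−1/2}. -/
open Real BigOperators Finset

noncomputable section

/-! The identity splits as `μ/(μ-1) = μ²/(μ²-1) + μ/(μ²-1)`. With `x = 1/(24n)` and `a = α⁻²` one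
has `1/μ² = a x/(1-x)`, so the even part is the rational function `(1-x)²/(1-(1+a)x)` of `1/n`,
whose Taylor coefficients are `E_2`, while the odd part is `n^{-1/2}` times
`(1-x)·√(1-x)/(1-(1+a)x)`. The coefficients `o_2` are those of `√(1-x)/(1-(1+a)x)`, the Cauchy
product of the binomial series of `√(1-x)` with a geometric series; this rests on a Pascal-rule
recurrence for the inner sums defining `o_2`. The factor `1-x` accounts for `O_2`. -/

theorem ff_eq_smeval_descPochhammer (x : ℝ) (n : ℕ) : ff x n = (descPochhammer ℤ n).smeval x := by
  induction n with
  | zero => simp [ff, Polynomial.smeval_one]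
  | succ n ih =>
    rw [descPochhammer_succ_right, Polynomial.smeval_mul, ← ih, ff, Polynomial.smeval_sub,
      Polynomial.smeval_X, Polynomial.smeval_natCast]
    simp

theorem gbinom_eq_ringChoose (x : ℝ) (n : ℕ) : gbinom x n = Ring.choose x n := by
  rw [gbinom, ff_eq_smeval_descPochhammer, Ring.descPochhammer_eq_factorial_smul_choose,
    nsmul_eq_mul]
  field_simp

section BinomialGeometric

variable {R : Type*} [CommRing R] [BinomialRing R]

/-- Up to the sign `(-1)^t`, the `t`-th Taylor coefficient of `(1-x)^s / (1-(1+a)x)`, obtained by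
expanding `(1-x)^(s-1) / (1 - a x/(1-x)) = ∑ₘ (a x)^m (1-x)^(s-1-m)`. -/
def binomGeomCoeff (s a : R) (t : ℕ) : R :=
  ∑ m ∈ range (t + 1), (-a) ^ m * Ring.choose (s - 1 - m) (t - m)

theorem binomGeomCoeff_succ (s a : R) (t : ℕ) :
    binomGeomCoeff s a (t + 1) = Ring.choose s (t + 1) - (1 + a) * binomGeomCoeff s a t := by
  set A := ∑ m ∈ range t, (-a) ^ m * Ring.choose (s - 1 - m) (t - m)
  have h_last : binomGeomCoeff s a t = A + (-a) ^ t := by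
    simp [binomGeomCoeff, sum_range_succ, A]
  have h_succ_last : binomGeomCoeff s a (t + 1) =
      ∑ m ∈ range (t + 1), (-a) ^ m * Ring.choose (s - 1 - m) (t - m + 1) + (-a) ^ (t + 1) := by
    rw [binomGeomCoeff, sum_range_succ, Nat.sub_self, Ring.choose_zero_right, mul_one]
    congr 1
    refine sum_congr rfl fun m hm => ?_
    rw [show t + 1 - m = t - m + 1 by have := mem_range.1 hm; omega]
  have h_pascal : ∑ m ∈ range (t + 1), (-a) ^ m * Ring.choose (s - 1 - m) (t - m + 1) =
      ∑ m ∈ range (t + 1), (-a) ^ m * Ring.choose (s - m) (t - m + 1) - binomGeomCoeff s a t := by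
    rw [binomGeomCoeff, ← sum_sub_distrib]
    refine sum_congr rfl fun m _ => ?_
    have h := Ring.choose_succ_succ (s - 1 - m) (t - m)
    rw [show s - 1 - m + 1 = s - m by ring] at h
    rw [h]
    ring
  have h_shift : ∑ m ∈ range (t + 1), (-a) ^ m * Ring.choose (s - m) (t - m + 1) =
      -a * A + Ring.choose s (t + 1) := by
    rw [sum_range_succ', mul_sum]
    simp only [Nat.cast_add, Nat.cast_one, Nat.cast_zero, pow_zero, sub_zero, one_mul,
      Nat.sub_zero]
    congr 1
    refine sum_congr rfl fun m hm => ?_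
    rw [show t - (m + 1) + 1 = t - m by have := mem_range.1 hm; omega, pow_succ]
    ring_nf
  rw [h_succ_last, h_pascal, h_shift, h_last]
  ring

theorem neg_pow_mul_binomGeomCoeff (s a x : R) (t : ℕ) :
    (-x) ^ t * binomGeomCoeff s a t =
      ∑ j ∈ range (t + 1), Ring.choose s j * (-x) ^ j * ((1 + a) * x) ^ (t - j) := by
  induction t with
  | zero => simp [binomGeomCoeff]
  | succ t ih =>
    rw [binomGeomCoeff_succ, sum_range_succ, Nat.sub_self, pow_zero, mul_one]
    have h_init : ∑ j ∈ range (t + 1), Ring.choose s j * (-x) ^ j * ((1 + a) * x) ^ (t + 1 - j) =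
        (1 + a) * x * ((-x) ^ t * binomGeomCoeff s a t) := by
      rw [ih, mul_sum]
      refine sum_congr rfl fun j hj => ?_
      rw [show t + 1 - j = t - j + 1 by have := mem_range.1 hj; omega, pow_succ]
      ring
    rw [h_init]
    ring

end BinomialGeometric

theorem hasSum_choose_mul_pow (s : ℝ) {x : ℝ} (hx : |x| < 1) :
    HasSum (fun j => Ring.choose s j * x ^ j) ((1 + x) ^ s) := by
  have hmem : x ∈ Metric.eball (0 : ℝ) 1 := by
    simpa [edist_dist, Real.dist_eq] using hx
  simpa [binomialSeries, FormalMultilinearSeries.ofScalars_apply_eq, mul_comm] using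
    Real.one_add_rpow_hasFPowerSeriesOnBall_zero.hasSum hmem

theorem summable_norm_choose_mul_pow (s : ℝ) {x : ℝ} (hx : |x| < 1) :
    Summable (fun j => ‖Ring.choose s j * x ^ j‖) := by
  have hmem : x ∈ Metric.eball (0 : ℝ) (binomialSeries ℝ s).radius := by
    refine Metric.eball_subset_eball binomialSeries_radius_ge_one ?_
    simpa [edist_dist, Real.dist_eq] using hx
  simpa [binomialSeries, FormalMultilinearSeries.ofScalars_apply_eq, mul_comm] using
    (binomialSeries ℝ s).summable_norm_apply hmem

theorem hasSum_neg_pow_mul_binomGeomCoeff (s a : ℝ) {x : ℝ} (hx : |x| < 1)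
    (hq : |(1 + a) * x| < 1) :
    HasSum (fun t => (-x) ^ t * binomGeomCoeff s a t) ((1 - x) ^ s / (1 - (1 + a) * x)) := by
  have hx' : |-x| < 1 := by rwa [abs_neg]
  have h_geom : Summable (fun k => ‖((1 + a) * x) ^ k‖) := by
    simpa [norm_pow] using summable_geometric_of_lt_one (abs_nonneg _) hq
  have h := hasSum_sum_range_mul_of_summable_norm (summable_norm_choose_mul_pow s hx') h_geom
  rw [(hasSum_choose_mul_pow s hx').tsum_eq, tsum_geometric_of_abs_lt_one hq, ← sub_eq_add_neg,
    ← div_eq_mul_inv] at h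
  simpa only [neg_pow_mul_binomGeomCoeff] using h

theorem inv_αc_sq : (αc ^ 2)⁻¹ = 36 / π ^ 2 := by
  rw [αc, div_pow, inv_div]
  norm_num

theorem inv_αc_sq_lt_four : (αc ^ 2)⁻¹ < 4 := by
  rw [inv_αc_sq, div_lt_iff₀ (by positivity)]
  nlinarith [pi_gt_three]

theorem E2_one : E2 1 = ((αc ^ 2)⁻¹ - 1) / 24 := by
  have := pi_pos.ne'
  rw [E2, if_neg one_ne_zero, if_pos rfl, inv_αc_sq]
  field_simp

theorem E2_add_two (t : ℕ) :
    E2 (t + 2) = ((αc ^ 2)⁻¹ / 24) ^ 2 * ((1 + (αc ^ 2)⁻¹) / 24) ^ t := by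
  rw [E2, if_neg (by omega), if_neg (by omega), show t + 2 - 1 = t + 1 by omega,
    pow_succ' ((1 + (αc ^ 2)⁻¹) / 24), ← mul_assoc]
  congr 1
  have := pi_pos.ne'
  rw [inv_αc_sq]
  field_simp
  ring

theorem hasSum_E2_mul_pow {y : ℝ} (hy : |(1 + (αc ^ 2)⁻¹) * (y / 24)| < 1) :
    HasSum (fun t => E2 t * y ^ t) ((1 - y / 24) ^ 2 / (1 - (1 + (αc ^ 2)⁻¹) * (y / 24))) := by
  set a := (αc ^ 2)⁻¹ with ha
  have h_denom : 1 - (1 + a) * (y / 24) ≠ 0 := by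
    have := (abs_lt.1 hy).2
    linarith
  have h_tail : (fun t => E2 (t + 2) * y ^ (t + 2)) =
      fun t => (a * (y / 24)) ^ 2 * ((1 + a) * (y / 24)) ^ t := by
    ext t
    rw [E2_add_two, ← ha, pow_add, show (1 + a) * (y / 24) = (1 + a) / 24 * y by ring,
      mul_pow ((1 + a) / 24) y t]
    ring
  have h_head : (1 - y / 24) ^ 2 / (1 - (1 + a) * (y / 24)) - ∑ i ∈ range 2, E2 i * y ^ i =
      (a * (y / 24)) ^ 2 * (1 - (1 + a) * (y / 24))⁻¹ := by
    have h_split : (1 - y / 24) ^ 2 =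
        (1 + (a - 1) / 24 * y) * (1 - (1 + a) * (y / 24)) + (a * (y / 24)) ^ 2 := by
      ring
    rw [sum_range_succ, sum_range_one, E2_one, ← ha, show E2 0 = 1 from if_pos rfl, h_split,
      add_div, mul_div_cancel_right₀ _ h_denom]
    ring
  rw [← hasSum_nat_add_iff' 2, h_tail, h_head]
  exact (hasSum_geometric_of_abs_lt_one hy).mul_left _

theorem o2_mul_pow (y : ℝ) (t : ℕ) :
    o2 t * y ^ t = 6 / (π * √24) * ((-(y / 24)) ^ t * binomGeomCoeff (1 / 2) (αc ^ 2)⁻¹ t) := by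
  have h_arg (m : ℕ) : -(2 * (m : ℝ) + 1) / 2 = 1 / 2 - 1 - m := by ring
  have h_pow : (-(y / 24)) ^ t = (-1 / 24) ^ t * y ^ t := by
    rw [← mul_pow]
    ring
  simp only [o2, binomGeomCoeff, gbinom_eq_ringChoose, h_arg, h_pow]
  ring

theorem hasSum_o2_mul_pow {y : ℝ} (hy : |y / 24| < 1) (hq : |(1 + (αc ^ 2)⁻¹) * (y / 24)| < 1) :
    HasSum (fun t => o2 t * y ^ t)
      (6 / (π * √24) * (√(1 - y / 24) / (1 - (1 + (αc ^ 2)⁻¹) * (y / 24)))) := by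
  simp only [o2_mul_pow, sqrt_eq_rpow]
  exact (hasSum_neg_pow_mul_binomGeomCoeff _ _ hy hq).mul_left _

theorem hasSum_O2_mul_pow {y s : ℝ} (h : HasSum (fun t => o2 t * y ^ t) s) :
    HasSum (fun t => O2 t * y ^ t) ((1 - y / 24) * s) := by
  rw [← hasSum_nat_add_iff' 1, sum_range_one]
  have h_succ := (hasSum_nat_add_iff' 1).2 h
  rw [sum_range_one] at h_succ
  convert h_succ.sub (h.mul_left (y / 24)) using 1
  · ext t
    simp only [O2, if_neg (Nat.succ_ne_zero t), Nat.add_sub_cancel]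
    ring
  · simp only [O2, if_pos]
    ring

theorem abs_inv_natCast_div_lt_one (n : ℕ) : |(n : ℝ)⁻¹ / 24| < 1 := by
  rw [abs_of_nonneg (by positivity)]
  linarith [Nat.cast_inv_le_one (α := ℝ) n]

theorem abs_one_add_inv_αc_sq_mul_lt_one (n : ℕ) :
    |(1 + (αc ^ 2)⁻¹) * ((n : ℝ)⁻¹ / 24)| < 1 := by
  rw [abs_of_nonneg (by positivity)]
  nlinarith [inv_αc_sq_lt_four, Nat.cast_inv_le_one (α := ℝ) n,
    inv_nonneg.2 (n.cast_nonneg (α := ℝ))]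

theorem hasSum_E2_mul_rpow (n : ℕ) :
    HasSum (fun t : ℕ => E2 t * (n : ℝ) ^ (-(t : ℝ)))
      ((1 - (n : ℝ)⁻¹ / 24) ^ 2 / (1 - (1 + (αc ^ 2)⁻¹) * ((n : ℝ)⁻¹ / 24))) := by
  simpa only [rpow_neg n.cast_nonneg, rpow_natCast, inv_pow] using
    hasSum_E2_mul_pow (abs_one_add_inv_αc_sq_mul_lt_one n)

theorem hasSum_O2_mul_rpow {n : ℕ} (hn : n ≠ 0) :
    HasSum (fun t : ℕ => O2 t * (n : ℝ) ^ (-(t : ℝ) - 1 / 2))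
      ((1 - (n : ℝ)⁻¹ / 24) * (6 / (π * √24) * √(1 - (n : ℝ)⁻¹ / 24) / √n /
        (1 - (1 + (αc ^ 2)⁻¹) * ((n : ℝ)⁻¹ / 24)))) := by
  have hn0 : (0 : ℝ) < n := by positivity
  have h := (hasSum_O2_mul_pow (hasSum_o2_mul_pow (abs_inv_natCast_div_lt_one n)
    (abs_one_add_inv_αc_sq_mul_lt_one n))).mul_left (√n)⁻¹
  have h_term (t : ℕ) :
      (√n)⁻¹ * (O2 t * ((n : ℝ)⁻¹) ^ t) = O2 t * (n : ℝ) ^ (-(t : ℝ) - 1 / 2) := by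
    rw [rpow_sub hn0, rpow_neg hn0.le, rpow_natCast, ← sqrt_eq_rpow, inv_pow]
    ring
  simp only [h_term] at h
  exact (congrArg (HasSum _) (by ring)).mp h

theorem μ_eq (n : ℕ) (hn : n ≠ 0) : μ n = αc * √24 * √n * √(1 - (n : ℝ)⁻¹ / 24) := by
  have h : 24 * (n : ℝ) - 1 = 24 * n * (1 - (n : ℝ)⁻¹ / 24) := by
    field_simp
  rw [μ, h, sqrt_mul (by positivity), sqrt_mul (by positivity), αc]
  ring

theorem inv_αc_sq_mul_mul_μ_sq (n : ℕ) (hn : n ≠ 0) :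
    (αc ^ 2)⁻¹ * ((n : ℝ)⁻¹ / 24) * μ n ^ 2 = 1 - (n : ℝ)⁻¹ / 24 := by
  have hx : 0 ≤ 1 - (n : ℝ)⁻¹ / 24 := by linarith [Nat.cast_inv_le_one (α := ℝ) n]
  have hαc : αc ≠ 0 := by rw [αc]; positivity
  rw [μ_eq n hn, mul_pow, mul_pow, mul_pow, sq_sqrt hx, sq_sqrt n.cast_nonneg,
    sq_sqrt (by norm_num)]
  field_simp

theorem mul_μ_eq_one_sub (n : ℕ) (hn : n ≠ 0) :
    6 / (π * √24) * √(1 - (n : ℝ)⁻¹ / 24) / √n * μ n = 1 - (n : ℝ)⁻¹ / 24 := by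
  have hx : 0 ≤ 1 - (n : ℝ)⁻¹ / 24 := by linarith [Nat.cast_inv_le_one (α := ℝ) n]
  have hπ := pi_pos.ne'
  have h24 : √24 ≠ 0 := by positivity
  have hsn : √n ≠ 0 := by positivity
  rw [μ_eq n hn, αc]
  have hs := sq_sqrt hx
  generalize √(1 - (n : ℝ)⁻¹ / 24) = s at hs ⊢
  rw [← hs]
  field_simp

theorem one_lt_μ (n : ℕ) (hn : 1 ≤ n) : 1 < μ n := by
  have hn1 := (Nat.one_le_cast (α := ℝ)).2 hn
  have h4 : 4 ≤ √(24 * (n : ℝ) - 1) := by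
    rw [le_sqrt (by norm_num) (by linarith)]
    linarith
  rw [μ]
  nlinarith [pi_gt_three]

theorem one_sub_mul_inv_one_sub_inv_eq {μ x a c : ℝ} (hμ : 1 < μ) (hx : x < 1)
    (ha : a * x * μ ^ 2 = 1 - x) (hc : c * μ = 1 - x) :
    (1 - x) * (1 - 1 / μ)⁻¹ =
      (1 - x) ^ 2 / (1 - (1 + a) * x) + (1 - x) * (c / (1 - (1 + a) * x)) := by
  have hμ0 : μ ≠ 0 := by positivity
  have h_denom : 1 - (1 + a) * x = (1 - x) * (μ ^ 2 - 1) / μ ^ 2 := by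
    field_simp
    linear_combination (-1) * ha
  have hc' : c = (1 - x) / μ := by
    field_simp
    exact hc
  have h1 : μ - 1 ≠ 0 := by linarith
  have h2 : μ ^ 2 - 1 ≠ 0 := by nlinarith
  have h3 : 1 - x ≠ 0 := by linarith
  rw [h_denom, hc']
  field_simp
  ring

/-- expansion of `(1 − 1/(24n))·(1 − 1/μ(n))⁻¹`. -/
theorem T2_expansion (n : ℕ) (hn : 1 ≤ n) :
    Summable (fun t : ℕ => E2 t * (n : ℝ) ^ (-(t : ℝ))) ∧
    Summable (fun t : ℕ => O2 t * (n : ℝ) ^ (-(t : ℝ) - 1 / 2)) ∧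
    (1 - 1 / (24 * (n : ℝ))) * (1 - 1 / μ n)⁻¹ =
      (∑' t : ℕ, E2 t * (n : ℝ) ^ (-(t : ℝ))) +
        ∑' t : ℕ, O2 t * (n : ℝ) ^ (-(t : ℝ) - 1 / 2) := by
  have hn0 : n ≠ 0 := by omega
  have hE := hasSum_E2_mul_rpow n
  have hO := hasSum_O2_mul_rpow hn0
  refine ⟨hE.summable, hO.summable, ?_⟩
  rw [hE.tsum_eq, hO.tsum_eq, show 1 / (24 * (n : ℝ)) = (n : ℝ)⁻¹ / 24 by ring]
  exact one_sub_mul_inv_one_sub_inv_eq (one_lt_μ n hn)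
    (abs_lt.1 (abs_inv_natCast_div_lt_one n)).2 (inv_αc_sq_mul_mul_μ_sq n hn0)
    (mul_μ_eq_one_sub n hn0)
end
end

section
/- For every integer t ≥ 2: |S_5(t) − cosh(α)/(2√π·t^{3/2})| ≤ 1.2·cosh(α)/(2√π·t^{5/2}), where S_5(t) := (−1)^{t−1}·(3/2−t)_t·Σ_{u=0}^{t−1} (−1)^u·(−t+1)_u·α^{2u}/((t+u)!·(2u)!). -/
open Real BigOperators Finset

noncomputable section

/-- `S_5(t)`. -/
def S5 (t : ℕ) : ℝ :=
  (-1 : ℝ) ^ (t - 1) * rf (3 / 2 - (t : ℝ)) t *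
    ∑ u ∈ Finset.range t,
      (-1 : ℝ) ^ u * rf (-(t : ℝ) + 1) u * αc ^ (2 * u) /
        ((Nat.factorial (t + u) : ℝ) * (Nat.factorial (2 * u) : ℝ))

/-!
Write `t = s + 1`. The Pochhammer symbols collapse:
`(-1)^s (1/2 - s)_{s+1} = s! binom(2s, s) / (2·4^s)` and
`(-1)^u (-s)_u / (s+1+u)! = w_{s,u} / (s+1)!` with `w_{s,u} = ∏_{j<u} (s-j)/(s+2+j)`, so
`S_5(t) = binom(2s, s)/4^s / (2t) · ∑_{u ≤ s} w_{s,u} α^{2u}/(2u)!`.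
Wallis' product squeezes `binom(2s, s)/4^s` between `1/√(πt)` and `1/√(πs)`. The weights
satisfy `1 - u(u+1)/t ≤ w_{s,u} ≤ 1` (Weierstrass' product inequality), and since
`u(u+1)/(2u)! ≤ 1/(2u-2)!` the weighted sum lies between `cosh α (1 - α²/t)` and `cosh α`.
Both relative errors are at most `1.2/t` once `t ≥ 2`.
-/

namespace S5

lemma rf_succ' (a : ℝ) (m : ℕ) : rf a (m + 1) = a * rf (a + 1) m := by
  induction m with
  | zero => simp [rf]
  | succ m ih =>
    rw [rf, ih, rf]
    push_cast
    ring

lemma neg_one_pow_mul_rf_neg (x : ℝ) (n : ℕ) : (-1) ^ n * rf (-x) n = ff x n := by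
  induction n with
  | zero => simp [rf, ff]
  | succ n ih =>
    rw [rf, ff, ← ih]
    ring

lemma neg_one_pow_mul_rf_half_sub (n : ℕ) :
    (-1) ^ n * rf (1 / 2 - n) (n + 1) = (n.factorial : ℝ) * n.centralBinom / (2 * 4 ^ n) := by
  induction n with
  | zero => simp [rf]
  | succ n ih =>
    have hc : ((n + 1 : ℕ) : ℝ) * (n + 1).centralBinom = 2 * (2 * n + 1) * n.centralBinom := by
      exact_mod_cast Nat.succ_mul_centralBinom_succ n
    rw [rf_succ', show (1 / 2 - ((n + 1 : ℕ) : ℝ) + 1) = 1 / 2 - n by push_cast; ring,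
      Nat.factorial_succ, pow_succ, pow_succ]
    push_cast at hc ⊢
    linear_combination ((n : ℝ) + 1 / 2) * ih - (n.factorial : ℝ) / (8 * 4 ^ n) * hc

lemma one_sub_sum_le_prod_one_sub {ι : Type*} (t : Finset ι) (x : ι → ℝ)
    (h0 : ∀ i ∈ t, 0 ≤ x i) (h1 : ∀ i ∈ t, x i ≤ 1) :
    1 - ∑ i ∈ t, x i ≤ ∏ i ∈ t, (1 - x i) := by
  classical
  induction t using Finset.induction_on with
  | empty => simp
  | insert a t ha ih =>
    rw [sum_insert ha, prod_insert ha]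
    have hxa := h0 a (mem_insert_self a t)
    have hsum : 0 ≤ ∑ i ∈ t, x i := sum_nonneg fun i hi => h0 i (mem_insert_of_mem hi)
    have hprod :=
      ih (fun i hi => h0 i (mem_insert_of_mem hi)) fun i hi => h1 i (mem_insert_of_mem hi)
    nlinarith [h1 a (mem_insert_self a t)]

def weight (s u : ℕ) : ℝ := ∏ j ∈ range u, ((s : ℝ) - j) / (s + 2 + j)

lemma ff_mul_factorial (s u : ℕ) :
    ff s u * (s + 1).factorial = weight s u * (s + 1 + u).factorial := by
  induction u with
  | zero => simp [ff, weight]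
  | succ u ih =>
    rw [ff, weight, prod_range_succ, ← weight, ← add_assoc, Nat.factorial_succ (s + 1 + u)]
    have : (s : ℝ) + 2 + u ≠ 0 := by positivity
    push_cast
    field_simp
    linear_combination ((s : ℝ) - u) * ((s : ℝ) + 1 + u + 1) * ih

lemma weight_le_one {s u : ℕ} (hu : u ≤ s) : weight s u ≤ 1 := by
  refine prod_le_one (fun j hj => ?_) fun j hj => ?_
  · have : (j : ℝ) < s := by exact_mod_cast (mem_range.1 hj).trans_le hu
    exact div_nonneg (by linarith) (by positivity)
  · exact div_le_one_of_le₀ (by linarith [j.cast_nonneg (α := ℝ)]) (by positivity)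

lemma one_sub_le_weight {s u : ℕ} (hu : u ≤ s) :
    1 - u * (u + 1) / (s + 1) ≤ weight s u := by
  have hfactor : ∀ j : ℕ, ((s : ℝ) - j) / (s + 2 + j) = 1 - (2 * j + 2) / (s + 2 + j) := by
    intro j
    field_simp
    ring
  have hgauss : ∑ j ∈ range u, ((2 * j + 2) / (s + 1) : ℝ) = u * (u + 1) / (s + 1) := by
    rw [← sum_div]
    congr 1
    induction u with
    | zero => simp
    | succ u ih => rw [sum_range_succ, ih (by omega)]; push_cast; ring
  rw [weight, ← hgauss]
  simp_rw [hfactor]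
  refine le_trans ?_ (one_sub_sum_le_prod_one_sub _ _ (fun j _ => by positivity) fun j hj => ?_)
  · refine sub_le_sub_left (sum_le_sum fun j _ => ?_) 1
    exact div_le_div_of_nonneg_left (by positivity) (by positivity)
      (by linarith [j.cast_nonneg (α := ℝ)])
  · have : (j : ℝ) + 1 ≤ s := by exact_mod_cast (mem_range.1 hj).trans_le hu
    rw [div_le_one (by positivity)]
    linarith

lemma succ_eq_centralBinom_mul_sum (s : ℕ) :
    S5 (s + 1) = s.centralBinom / 4 ^ s / (2 * (s + 1)) *
      ∑ u ∈ range (s + 1), weight s u * (αc ^ (2 * u) / (2 * u).factorial) := by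
  have hhalf : (3 / 2 - ((s + 1 : ℕ) : ℝ)) = 1 / 2 - s := by push_cast; ring
  have hneg : -((s + 1 : ℕ) : ℝ) + 1 = -s := by push_cast; ring
  rw [S5, Nat.add_sub_cancel, hhalf, hneg, mul_sum, mul_sum]
  refine sum_congr rfl fun u _ => ?_
  have hff : ff s u = weight s u * (s + 1 + u).factorial / (s + 1).factorial := by
    rw [← ff_mul_factorial, mul_div_cancel_right₀ _ (by positivity)]
  have hpow : (-1 : ℝ) ^ s * rf (1 / 2 - s) (s + 1) * ((-1) ^ u * rf (-s) u) =
      s.factorial * s.centralBinom / (2 * 4 ^ s) * ff s u := by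
    rw [neg_one_pow_mul_rf_half_sub, neg_one_pow_mul_rf_neg]
  rw [show ∀ a b c d f : ℝ, a * (b * c * d / f) = a * (b * c) * d / f by intros; ring,
    hpow, hff, Nat.factorial_succ]
  push_cast
  field_simp

lemma sq_centralBinom_div_four_pow_mul_W (s : ℕ) :
    ((s.centralBinom : ℝ) / 4 ^ s) ^ 2 * (2 * s + 1) * Real.Wallis.W s = 1 := by
  have hc : (s.centralBinom : ℝ) * s.factorial * s.factorial = (2 * s).factorial := by
    have h := Nat.choose_mul_factorial_mul_factorial (show s ≤ 2 * s by omega)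
    rw [show 2 * s - s = s by omega, ← Nat.centralBinom_eq_two_mul_choose] at h
    exact_mod_cast h
  rw [Real.Wallis.W_eq_factorial_ratio, ← hc, show (2 : ℝ) ^ (4 * s) = (4 ^ s) ^ 2 by
    rw [show (4 : ℝ) = 2 ^ 2 by norm_num, ← pow_mul, ← pow_mul]; ring_nf]
  have : (s.centralBinom : ℝ) ≠ 0 := by exact_mod_cast s.centralBinom_ne_zero
  field_simp

lemma one_le_pi_mul_succ_mul_sq_centralBinom_div (s : ℕ) :
    1 ≤ π * (s + 1) * ((s.centralBinom : ℝ) / 4 ^ s) ^ 2 := by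
  have h := sq_centralBinom_div_four_pow_mul_W s
  have hW := Real.Wallis.W_le s
  nlinarith [sq_nonneg ((s.centralBinom : ℝ) / 4 ^ s), s.cast_nonneg (α := ℝ),
    mul_le_mul_of_nonneg_left hW (by positivity :
      0 ≤ ((s.centralBinom : ℝ) / 4 ^ s) ^ 2 * (2 * s + 1))]

lemma pi_mul_sq_centralBinom_div_le_one (s : ℕ) :
    π * s * ((s.centralBinom : ℝ) / 4 ^ s) ^ 2 ≤ 1 := by
  set b := ((s.centralBinom : ℝ) / 4 ^ s) ^ 2
  have hW : b * (2 * s + 1) * ((2 * s + 1) / (2 * s + 2) * (π / 2)) ≤ 1 :=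
    (mul_le_mul_of_nonneg_left (Real.Wallis.le_W s) (by positivity)).trans_eq
      (sq_centralBinom_div_four_pow_mul_W s)
  rw [show b * (2 * s + 1) * ((2 * s + 1) / (2 * s + 2) * (π / 2)) =
    π * b * ((2 * s + 1) ^ 2 / (4 * (s + 1))) by field_simp; ring] at hW
  have hs' : (s : ℝ) ≤ (2 * s + 1) ^ 2 / (4 * (s + 1)) := by
    rw [le_div_iff₀ (by positivity)]
    nlinarith
  calc π * s * b = π * b * s := by ring
    _ ≤ π * b * ((2 * s + 1) ^ 2 / (4 * (s + 1))) := by gcongr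
    _ ≤ 1 := hW

lemma cosh_term_nonneg (x : ℝ) (u : ℕ) : 0 ≤ x ^ (2 * u) / (2 * u).factorial :=
  div_nonneg ((even_two_mul u).pow_nonneg x) (Nat.cast_nonneg _)

lemma mul_cosh_term_succ_le (x : ℝ) (u : ℕ) :
    ((u + 1 : ℕ) : ℝ) * ((u + 1 : ℕ) + 1) * (x ^ (2 * (u + 1)) / (2 * (u + 1)).factorial) ≤
      x ^ 2 * (x ^ (2 * u) / (2 * u).factorial) := by
  have hfact : ((2 * (u + 1)).factorial : ℝ) = (2 * u + 2) * (2 * u + 1) * (2 * u).factorial := by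
    rw [show 2 * (u + 1) = 2 * u + 1 + 1 by ring, Nat.factorial_succ, Nat.factorial_succ]
    push_cast
    ring
  have hsplit :
      ((u + 1 : ℕ) : ℝ) * ((u + 1 : ℕ) + 1) * (x ^ (2 * (u + 1)) / (2 * (u + 1)).factorial) =
        x ^ 2 * (x ^ (2 * u) / (2 * u).factorial) *
          ((u + 1) * (u + 2) / ((2 * u + 2) * (2 * u + 1))) := by
    rw [hfact]
    push_cast
    field_simp
    ring
  rw [hsplit]
  exact mul_le_of_le_one_right (mul_nonneg (sq_nonneg x) (cosh_term_nonneg x u))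
    (div_le_one_of_le₀ (by nlinarith [u.cast_nonneg (α := ℝ)]) (by positivity))

lemma summable_mul_cosh_term (x : ℝ) :
    Summable fun u : ℕ => (u : ℝ) * (u + 1) * (x ^ (2 * u) / (2 * u).factorial) := by
  rw [← summable_nat_add_iff 1]
  refine ((Real.hasSum_cosh x).summable.mul_left (x ^ 2)).of_nonneg_of_le (fun u => ?_)
    (mul_cosh_term_succ_le x)
  exact mul_nonneg (by positivity) (cosh_term_nonneg x _)

lemma tsum_mul_cosh_term_le (x : ℝ) :
    ∑' u : ℕ, (u : ℝ) * (u + 1) * (x ^ (2 * u) / (2 * u).factorial) ≤ x ^ 2 * cosh x := by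
  rw [(summable_mul_cosh_term x).tsum_eq_zero_add, ← (Real.hasSum_cosh x).tsum_eq,
    ← tsum_mul_left]
  simp only [CharP.cast_eq_zero, zero_mul, zero_add]
  exact Summable.tsum_le_tsum (mul_cosh_term_succ_le x)
    ((summable_nat_add_iff 1).2 (summable_mul_cosh_term x))
    ((Real.hasSum_cosh x).summable.mul_left (x ^ 2))

lemma sum_weight_mul_cosh_term_le (x : ℝ) (s : ℕ) :
    ∑ u ∈ range (s + 1), weight s u * (x ^ (2 * u) / (2 * u).factorial) ≤ cosh x := by
  refine le_trans (sum_le_sum fun u hu => ?_)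
    (sum_le_hasSum _ (fun u _ => cosh_term_nonneg x u) (Real.hasSum_cosh x))
  exact mul_le_of_le_one_left (cosh_term_nonneg x u)
    (weight_le_one (Nat.lt_succ_iff.1 (mem_range.1 hu)))

lemma cosh_mul_one_sub_le_sum_weight_mul_cosh_term (x : ℝ) (s : ℕ) :
    cosh x * (1 - x ^ 2 / (s + 1)) ≤
      ∑ u ∈ range (s + 1), weight s u * (x ^ (2 * u) / (2 * u).factorial) := by
  set a : ℕ → ℝ := fun u => x ^ (2 * u) / (2 * u).factorial
  set Q := ∑' u : ℕ, (u : ℝ) * (u + 1) * a u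
  have hs : (0 : ℝ) < s + 1 := by positivity
  have hsum : HasSum (fun u => -(a u - u * (u + 1) * a u / (s + 1))) (-(cosh x - Q / (s + 1))) :=
    ((Real.hasSum_cosh x).sub ((summable_mul_cosh_term x).hasSum.div_const (s + 1))).neg
  -- the terms with `u > s` of the series `∑ (1 - u(u+1)/(s+1)) a u` are nonpositive
  have htail :
      cosh x - Q / (s + 1) ≤ ∑ u ∈ range (s + 1), (a u - u * (u + 1) * a u / (s + 1)) := by
    refine neg_le_neg_iff.1 ((sum_neg_distrib _).symm.trans_le
      (sum_le_hasSum _ (fun u hu => ?_) hsum))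
    have : (s : ℝ) + 1 ≤ u := by exact_mod_cast not_lt.1 (mem_range.not.1 hu)
    rw [neg_nonneg, sub_nonpos, le_div_iff₀ hs, mul_comm]
    exact mul_le_mul_of_nonneg_right (by nlinarith) (cosh_term_nonneg x u)
  calc cosh x * (1 - x ^ 2 / (s + 1)) ≤ cosh x - Q / (s + 1) := by
        have := tsum_mul_cosh_term_le x
        rw [mul_sub, mul_one, mul_div_assoc', sub_le_sub_iff_left]
        gcongr
        linarith
    _ ≤ ∑ u ∈ range (s + 1), (a u - u * (u + 1) * a u / (s + 1)) := htail
    _ ≤ _ := by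
        refine sum_le_sum fun u hu => ?_
        rw [mul_div_right_comm, ← one_sub_mul]
        exact mul_le_mul_of_nonneg_right (one_sub_le_weight (Nat.lt_succ_iff.1 (mem_range.1 hu)))
          (cosh_term_nonneg x u)

lemma abs_mul_sub_one_le {t β τ ε : ℝ} (ht : 2 ≤ t) (hβ : 1 ≤ β)
    (hβt : β ^ 2 * (t - 1) ≤ t) (hτ : 1 - ε / t ≤ τ) (hτ1 : τ ≤ 1) (hε : ε ≤ 1.2) :
    |β * τ - 1| ≤ 1.2 / t := by
  have ht0 : 0 < t := by linarith
  have hεt : ε / t ≤ 1.2 / t := by gcongr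
  have he : 1.2 / t ≤ 0.6 := by rw [div_le_iff₀ ht0]; linarith
  have hte : t * (1.2 / t) = 1.2 := by field_simp
  have hβe : β ≤ 1 + 1.2 / t := by
    by_contra! h
    nlinarith [mul_lt_mul'' h h (by positivity) (by positivity),
      div_pos (by norm_num : (0 : ℝ) < 1.2) ht0]
  rw [abs_le]
  constructor
  · nlinarith [mul_nonneg (sub_nonneg.2 hβ) (show 0 ≤ τ by linarith)]
  · nlinarith [mul_nonneg (show 0 ≤ β by linarith) (sub_nonneg.2 hτ1)]

lemma abs_sub_le_of_bounds {t B T C ε : ℝ} (ht : 2 ≤ t) (hC : 0 < C) (hB : 0 ≤ B)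
    (hB1 : 1 ≤ π * t * B ^ 2) (hB2 : π * (t - 1) * B ^ 2 ≤ 1)
    (hT1 : C * (1 - ε / t) ≤ T) (hT2 : T ≤ C) (hε : ε ≤ 1.2) :
    |B / (2 * t) * T - C / (2 * √π * t ^ ((3 : ℝ) / 2))| ≤
      1.2 * C / (2 * √π * t ^ ((5 : ℝ) / 2)) := by
  have ht0 : 0 < t := by linarith
  have h32 : t ^ ((3 : ℝ) / 2) = t * √t := by
    rw [show (3 : ℝ) / 2 = 1 + 1 / 2 by norm_num, rpow_add ht0, rpow_one, sqrt_eq_rpow]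
  have h52 : t ^ ((5 : ℝ) / 2) = t ^ 2 * √t := by
    rw [show (5 : ℝ) / 2 = 2 + 1 / 2 by norm_num, rpow_add ht0, rpow_two, sqrt_eq_rpow]
  set β := B * √π * √t
  have hβsq : β ^ 2 = π * t * B ^ 2 := by
    rw [mul_pow, mul_pow, sq_sqrt pi_pos.le, sq_sqrt ht0.le]; ring
  have key : |β * (T / C) - 1| ≤ 1.2 / t := by
    refine abs_mul_sub_one_le ht (by nlinarith [show 0 ≤ β by positivity]) (by nlinarith)
      ?_ ((div_le_one hC).2 hT2) hε
    rwa [le_div_iff₀ hC, mul_comm]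
  rw [h32, h52]
  set m := C / (2 * √π * (t * √t))
  have hm : 0 < m := by positivity
  calc |B / (2 * t) * T - m| = |m * (β * (T / C) - 1)| := by
        congr 1
        simp only [m, β]
        field_simp
    _ = m * |β * (T / C) - 1| := by rw [abs_mul, abs_of_pos hm]
    _ ≤ m * (1.2 / t) := by gcongr
    _ = 1.2 * C / (2 * √π * (t ^ 2 * √t)) := by
        simp only [m]
        field_simp

end S5

/-- asymptotic estimate for `S_5(t)`. -/
theorem S5_estimate (t : ℕ) (ht : 2 ≤ t) :
    |S5 t - Real.cosh αc / (2 * Real.sqrt π * (t : ℝ) ^ ((3 : ℝ) / 2))| ≤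
      1.2 * Real.cosh αc / (2 * Real.sqrt π * (t : ℝ) ^ ((5 : ℝ) / 2)) := by
  obtain ⟨s, rfl⟩ : ∃ s, t = s + 1 := ⟨t - 1, by omega⟩
  have hα : αc ^ 2 ≤ 1.2 := by rw [αc]; nlinarith [pi_lt_four, pi_pos]
  rw [S5.succ_eq_centralBinom_mul_sum]
  push_cast
  refine S5.abs_sub_le_of_bounds (by exact_mod_cast ht) (cosh_pos αc) (by positivity)
    (S5.one_le_pi_mul_succ_mul_sq_centralBinom_div s)
    (by simpa using S5.pi_mul_sq_centralBinom_div_le_one s)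
    (S5.cosh_mul_one_sub_le_sum_weight_mul_cosh_term αc s)
    (S5.sum_weight_mul_cosh_term_le αc s) hα
end
end
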